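/- arXiv:math-ph/0412018 — 4 statements merged into one kernel-verified Lean document; each statement's English description precedes it below -/
import Mathlib

section
/- Let p, q ∈ ℝ³ and let P⁰(p) = χ_{(−∞,0)}(α·p + β) be the 4×4 negative spectral projection of the Dirac matrix symbol D⁰(p) = α·p + β. Then Tr_{ℂ⁴}(P⁰(p)(1 − P⁰(q))) ≤ |p−q|²/(2 E((p+q)/2)²), where E(x) = √(1+|x|²). -/
open Matrix

lemma dirac_real_key (np nq c : ℝ) (hc : c ≤ np * nq) (hc3 : -(np*nq) ≤ c)
    (hc2 : c^2 ≤ np^2 * nq^2) :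
    1 - (1+c)/(Real.sqrt (1+np^2) * Real.sqrt (1+nq^2)) ≤
      (np^2 - 2*c + nq^2) / (2*(1 + (np^2+2*c+nq^2)/4)) := by
  set r := Real.sqrt (1+np^2) with hrdef
  set s := Real.sqrt (1+nq^2) with hsdef
  have hr2 : r^2 = 1+np^2 := Real.sq_sqrt (by positivity)
  have hs2 : s^2 = 1+nq^2 := Real.sq_sqrt (by positivity)
  have hr0 : 0 < r := Real.sqrt_pos.2 (by positivity)
  have hs0 : 0 < s := Real.sqrt_pos.2 (by positivity)
  have hrs : 0 < r*s := mul_pos hr0 hs0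
  have hsq : (1+c)^2 ≤ (r*s)^2 := by rw [mul_pow, hr2, hs2]; nlinarith [sq_nonneg (np-nq)]
  have hts : 1+c ≤ r*s := by nlinarith
  have htneg : -(r*s) ≤ 1+c := by nlinarith
  have hd : 0 < 2*(1 + (np^2+2*c+nq^2)/4) := by nlinarith [sq_nonneg (np-nq)]
  have h1 : 1 - (1+c)/(r*s) = (r*s - (1+c))/(r*s) := by field_simp
  rw [h1, div_le_div_iff₀ hrs hd]
  nlinarith [mul_nonneg (sq_nonneg (r-s)) (by linarith : (0:ℝ) ≤ r*s + (1+c)),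
    sq_nonneg (r*s - (1+c))]

/-- With `α₁,α₂,α₃,β` the Dirac matrices, `D⁰(p) = α·p + β`,
`E(p) = √(1+|p|²)`, and `P⁰(p) = (1 − D⁰(p)/E(p))/2` the negative spectral projection,
one has `Tr_{ℂ⁴}(P⁰(p)(1 − P⁰(q))) ≤ |p−q|²/(2 E((p+q)/2)²)`. -/
theorem dirac_projection_trace_bound
    (α : Fin 3 → Matrix (Fin 4) (Fin 4) ℂ) (β : Matrix (Fin 4) (Fin 4) ℂ)
    (hαα : ∀ i j, α i * α j + α j * α i = if i = j then (2 : ℂ) • 1 else 0)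
    (hαβ : ∀ i, α i * β + β * α i = 0) (hββ : β * β = 1)
    (hαH : ∀ i, (α i)ᴴ = α i) (hβH : βᴴ = β)
    (D0 : EuclideanSpace ℝ (Fin 3) → Matrix (Fin 4) (Fin 4) ℂ)
    (hD0 : ∀ r, D0 r = (∑ i, (r i : ℂ) • α i) + β)
    (En : EuclideanSpace ℝ (Fin 3) → ℝ)
    (hE : ∀ r, En r = Real.sqrt (1 + ‖r‖ ^ 2))
    (P0 : EuclideanSpace ℝ (Fin 3) → Matrix (Fin 4) (Fin 4) ℂ)
    (hP0 : ∀ r, P0 r = (2 : ℂ)⁻¹ • (1 - ((En r : ℂ))⁻¹ • D0 r))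
    (p q : EuclideanSpace ℝ (Fin 3)) :
    (Matrix.trace (P0 p * (1 - P0 q))).re ≤
      ‖p - q‖ ^ 2 / (2 * En ((2 : ℝ)⁻¹ • (p + q)) ^ 2) := by
  -- basic algebra of Dirac matrices
  have hα2 : ∀ i, α i * α i = 1 := by
    intro i
    have h := hαα i i
    rw [if_pos rfl] at h
    have h2 : (2:ℂ) • (α i * α i) = (2:ℂ) • (1 : Matrix (Fin 4) (Fin 4) ℂ) := by
      rw [two_smul]; exact h
    exact smul_right_injective _ (two_ne_zero) h2
  have hβα : ∀ i, β * α i = -(α i * β) := fun i => eq_neg_of_add_eq_zero_right (hαβ i)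
  have hαβ' : ∀ i, α i * β = -(β * α i) := fun i => eq_neg_of_add_eq_zero_left (hαβ i)
  -- traces of basic products
  have htrβ : trace β = 0 := by
    have h : trace β = - trace β := by
      calc trace β = trace (β * (α 0 * α 0)) := by rw [hα2, mul_one]
        _ = trace ((β * α 0) * α 0) := by rw [mul_assoc]
        _ = trace (α 0 * (β * α 0)) := trace_mul_comm _ _
        _ = trace (α 0 * -(α 0 * β)) := by rw [hβα]
        _ = - trace ((α 0 * α 0) * β) := by rw [mul_neg, trace_neg, mul_assoc]
        _ = - trace β := by rw [hα2, one_mul]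
    linear_combination h / 2
  have htrα : ∀ i, trace (α i) = 0 := by
    intro i
    have h : trace (α i) = - trace (α i) := by
      calc trace (α i) = trace (α i * (β * β)) := by rw [hββ, mul_one]
        _ = trace ((α i * β) * β) := by rw [mul_assoc]
        _ = trace (β * (α i * β)) := trace_mul_comm _ _
        _ = trace (β * -(β * α i)) := by rw [hαβ']
        _ = - trace ((β * β) * α i) := by rw [mul_neg, trace_neg, mul_assoc]
        _ = - trace (α i) := by rw [hββ, one_mul]
    linear_combination h / 2
  have htrαβ : ∀ i, trace (α i * β) = 0 := by
    intro i
    have h : trace (α i * β) = - trace (α i * β) := by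
      calc trace (α i * β) = trace (β * α i) := trace_mul_comm _ _
        _ = trace (-(α i * β)) := by rw [hβα]
        _ = - trace (α i * β) := trace_neg _
    linear_combination h / 2
  have htrβα : ∀ i, trace (β * α i) = 0 := by
    intro i; rw [trace_mul_comm]; exact htrαβ i
  have htrαα : ∀ i j, trace (α i * α j) = if i = j then 4 else 0 := by
    intro i j
    by_cases hij : i = j
    · subst hij; rw [if_pos rfl, hα2, trace_one]; norm_num
    · rw [if_neg hij]
      have hanti : α i * α j = -(α j * α i) := by
        have h := hαα i j
        rw [if_neg hij] at h
        exact eq_neg_of_add_eq_zero_left h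
      have h : trace (α i * α j) = - trace (α i * α j) := by
        calc trace (α i * α j) = trace (-(α j * α i)) := by rw [hanti]
          _ = - trace (α j * α i) := trace_neg _
          _ = - trace (α i * α j) := by rw [trace_mul_comm]
      linear_combination h / 2
  -- trace of D0 r is zero
  have htrD : ∀ r, trace (D0 r) = 0 := by
    intro r
    rw [hD0, trace_add, trace_sum]
    simp [trace_smul, htrα, htrβ]
  -- trace of D0 p * D0 q
  set c : ℝ := (inner ℝ p q : ℝ) with hcdef
  have hc_sum : (∑ i, (p i : ℂ) * (q i : ℂ)) = (c : ℂ) := by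
    rw [hcdef]
    simp [PiLp.inner_apply, RCLike.inner_apply, mul_comm]
    try push_cast
    try ring
  have htrDD : trace (D0 p * D0 q) = 4 * ((c : ℂ) + 1) := by
    rw [hD0, hD0]
    rw [add_mul, mul_add, mul_add, Finset.sum_mul]
    have e1 : ∀ i : Fin 3, (p i : ℂ) • α i * ∑ j, (q j : ℂ) • α j
        = ∑ j, ((p i : ℂ) * q j) • (α i * α j) := by
      intro i
      rw [Finset.mul_sum]
      congr 1; funext j
      rw [smul_mul_assoc, mul_smul_comm, smul_smul]
    have e2 : trace (∑ i, (p i : ℂ) • α i * ∑ j, (q j : ℂ) • α j)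
        = 4 * (c : ℂ) := by
      rw [Finset.sum_congr rfl (fun i _ => e1 i), trace_sum]
      rw [Finset.sum_congr rfl (fun i _ => trace_sum _ _)]
      have : ∀ i : Fin 3, ∑ j, trace (((p i : ℂ) * q j) • (α i * α j))
          = 4 * ((p i : ℂ) * q i) := by
        intro i
        rw [Finset.sum_eq_single i]
        · rw [trace_smul, htrαα, if_pos rfl, smul_eq_mul]; ring
        · intro j _ hji
          rw [trace_smul, htrαα, if_neg (Ne.symm hji)]; simp
        · intro h; exact absurd (Finset.mem_univ i) h
      rw [Finset.sum_congr rfl (fun i _ => this i), ← Finset.mul_sum, ← hc_sum]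
    rw [trace_add, trace_add, trace_add, e2, hββ, trace_one]
    have e3 : trace ((∑ i, (p i : ℂ) • α i) * β) = 0 := by
      rw [Finset.sum_mul, trace_sum]
      simp [smul_mul_assoc, trace_smul, htrαβ]
    have e4 : trace (β * ∑ j, (q j : ℂ) • α j) = 0 := by
      rw [Finset.mul_sum, trace_sum]
      simp [mul_smul_comm, trace_smul, htrβα]
    rw [e3, e4]
    simp
    ring
  -- the trace of the product of projections
  have hEp : 0 < En p := by rw [hE]; positivity
  have hEq : 0 < En q := by rw [hE]; positivity
  set ep : ℂ := ((En p : ℝ) : ℂ)⁻¹ with hepdef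
  set eq' : ℂ := ((En q : ℝ) : ℂ)⁻¹ with heqdef
  have hone : (1 : Matrix (Fin 4) (Fin 4) ℂ) - P0 q = (2:ℂ)⁻¹ • (1 + eq' • D0 q) := by
    rw [hP0]
    rw [smul_sub, smul_add]
    module
  have hprod : P0 p * ((1 : Matrix (Fin 4) (Fin 4) ℂ) - P0 q)
      = (4:ℂ)⁻¹ • ((1 : Matrix (Fin 4) (Fin 4) ℂ) + eq' • D0 q - ep • D0 p
          - (ep * eq') • (D0 p * D0 q)) := by
    rw [hone, hP0]
    simp only [smul_mul_assoc, mul_smul_comm, smul_smul, sub_mul, mul_add, mul_one, one_mul]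
    module
  have htr : trace (P0 p * (1 - P0 q))
      = ((1 - (En p)⁻¹ * (En q)⁻¹ * (c + 1) : ℝ) : ℂ) := by
    have hp0 : ((En p : ℝ) : ℂ) ≠ 0 := Complex.ofReal_ne_zero.mpr hEp.ne'
    have hq0 : ((En q : ℝ) : ℂ) ≠ 0 := Complex.ofReal_ne_zero.mpr hEq.ne'
    rw [hprod]
    simp only [trace_sub, trace_add, trace_smul, trace_one, htrD, htrDD, smul_eq_mul,
      Fintype.card_fin, hepdef, heqdef]
    push_cast
    field_simp
    ring
  rw [htr, Complex.ofReal_re]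
  -- norms and inner products
  have hnormsub : ‖p - q‖ ^ 2 = ‖p‖^2 - 2*c + ‖q‖^2 := by
    rw [hcdef, norm_sub_sq_real]; try ring
  have hEm : En ((2:ℝ)⁻¹ • (p + q)) ^ 2 = 1 + (‖p‖^2 + 2*c + ‖q‖^2)/4 := by
    have hn : ‖(2:ℝ)⁻¹ • (p + q)‖ ^ 2 = (‖p‖^2 + 2*c + ‖q‖^2)/4 := by
      rw [norm_smul, mul_pow, norm_add_sq_real, ← hcdef]
      norm_num [Real.norm_eq_abs]
      try ring
    rw [hE, Real.sq_sqrt (by positivity : (0:ℝ) ≤ 1 + ‖(2:ℝ)⁻¹ • (p+q)‖^2), hn]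
  have hEp2 : En p = Real.sqrt (1 + ‖p‖^2) := hE p
  have hEq2 : En q = Real.sqrt (1 + ‖q‖^2) := hE q
  have hcs : |c| ≤ ‖p‖ * ‖q‖ := abs_real_inner_le_norm p q
  have hc1 : c ≤ ‖p‖ * ‖q‖ := le_trans (le_abs_self c) hcs
  have hc3 : -(‖p‖ * ‖q‖) ≤ c := neg_le_of_abs_le hcs
  have hc2 : c^2 ≤ ‖p‖^2 * ‖q‖^2 := by
    rw [← mul_pow]
    calc c^2 = |c|^2 := (sq_abs c).symm
      _ ≤ (‖p‖*‖q‖)^2 := by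
        apply pow_le_pow_left₀ (abs_nonneg c) hcs
  have key := dirac_real_key ‖p‖ ‖q‖ c hc1 hc3 hc2
  rw [hnormsub, hEm, hEp2, hEq2]
  convert key using 2 <;> ring
end

section
/- Let P⁰(p) = (1 − (α·p + β)/E(p))/2 with E(p) = √(1+|p|²). Then Tr_{ℂ⁴}((P⁰(p+k/2) − P⁰(p−k/2))²) = 2 Tr_{ℂ⁴}(P⁰(p+k/2)(1 − P⁰(p−k/2))) ≤ |k|²/E(p)². -/
open Matrix

theorem dirac_key_real_ineq (s t u w : ℝ) (hs : 1 ≤ s) (ht : 0 ≤ t) (hw : 0 < w)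
    (hw2 : w ^ 2 = (s + t) ^ 2 - u ^ 2) (hu : u ^ 2 ≤ 4 * t * (s - 1)) :
    2 - 2 * (s - t) / w ≤ 4 * t / s := by
  have hs0 : 0 < s := by linarith
  have hle : w ≤ s + t := by nlinarith
  have hge : t - s ≤ w := by
    rcases le_or_gt t s with h | h
    · linarith
    · nlinarith
  have h1 : (2 - 2 * (s - t) / w) = (2 * w - 2 * (s - t)) / w := by
    field_simp
  rw [h1, div_le_div_iff₀ hw hs0]
  rcases le_or_gt s (2 * t) with h | h
  · nlinarith [mul_nonneg (by linarith : (0:ℝ) ≤ w - (t - s)) (by linarith : (0:ℝ) ≤ 4 * t - 2 * s), sq_nonneg (s - t)]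
  · nlinarith [mul_nonneg (by linarith : (0:ℝ) ≤ s + t - w) (by linarith : (0:ℝ) ≤ s - 2 * t), sq_nonneg t, ht]

/-- With `P⁰(p) = (1 − (α·p + β)/E(p))/2`, `E(p) = √(1+|p|²)`, one has
`Tr((P⁰(p+k/2) − P⁰(p−k/2))²) = 2 Tr(P⁰(p+k/2)(1 − P⁰(p−k/2))) ≤ |k|²/E(p)²`. -/
theorem dirac_projection_difference_bound
    (α : Fin 3 → Matrix (Fin 4) (Fin 4) ℂ) (β : Matrix (Fin 4) (Fin 4) ℂ)
    (hαα : ∀ i j, α i * α j + α j * α i = if i = j then (2 : ℂ) • 1 else 0)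
    (hαβ : ∀ i, α i * β + β * α i = 0) (hββ : β * β = 1)
    (hαH : ∀ i, (α i)ᴴ = α i) (hβH : βᴴ = β)
    (D0 : EuclideanSpace ℝ (Fin 3) → Matrix (Fin 4) (Fin 4) ℂ)
    (hD0 : ∀ r, D0 r = (∑ i, (r i : ℂ) • α i) + β)
    (En : EuclideanSpace ℝ (Fin 3) → ℝ)
    (hE : ∀ r, En r = Real.sqrt (1 + ‖r‖ ^ 2))
    (P0 : EuclideanSpace ℝ (Fin 3) → Matrix (Fin 4) (Fin 4) ℂ)
    (hP0 : ∀ r, P0 r = (2 : ℂ)⁻¹ • (1 - ((En r : ℂ))⁻¹ • D0 r))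
    (p k : EuclideanSpace ℝ (Fin 3)) :
    Matrix.trace ((P0 (p + (2 : ℝ)⁻¹ • k) - P0 (p - (2 : ℝ)⁻¹ • k)) *
          (P0 (p + (2 : ℝ)⁻¹ • k) - P0 (p - (2 : ℝ)⁻¹ • k))) =
        2 * Matrix.trace (P0 (p + (2 : ℝ)⁻¹ • k) * (1 - P0 (p - (2 : ℝ)⁻¹ • k))) ∧
      (Matrix.trace ((P0 (p + (2 : ℝ)⁻¹ • k) - P0 (p - (2 : ℝ)⁻¹ • k)) *
          (P0 (p + (2 : ℝ)⁻¹ • k) - P0 (p - (2 : ℝ)⁻¹ • k)))).re ≤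
        ‖k‖ ^ 2 / En p ^ 2 := by
  -- basic Clifford algebra trace facts
  have hc : ∀ i, α i * β = -(β * α i) := fun i => eq_neg_of_add_eq_zero_left (hαβ i)
  have hsq : ∀ i, α i * α i = 1 := by
    intro i
    have h := hαα i i
    rw [if_pos rfl] at h
    have h2 : (2:ℂ) • (α i * α i) = (2:ℂ) • (1 : Matrix (Fin 4) (Fin 4) ℂ) := by
      rw [two_smul]; exact h
    exact smul_right_injective _ (by norm_num) h2
  have htr1 : trace (1 : Matrix (Fin 4) (Fin 4) ℂ) = 4 := by
    simp [Matrix.trace_one]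
  have hαtr : ∀ i, trace (α i) = 0 := by
    intro i
    have h : trace (α i) = -trace (α i) := by
      conv_lhs => rw [← mul_one (α i), ← hββ, ← mul_assoc, hc i]
      rw [neg_mul, trace_neg, mul_assoc, trace_mul_comm, mul_assoc, hββ, mul_one]
    have h2 : (2:ℂ) * trace (α i) = 0 := by linear_combination h
    simpa using h2
  have hβtr : trace β = 0 := by
    have h : trace β = -trace β := by
      conv_lhs => rw [← mul_one β, ← hsq 0, ← mul_assoc]
      rw [trace_mul_comm, ← mul_assoc, hc 0, neg_mul, trace_neg, mul_assoc, hsq 0, mul_one]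
    have h2 : (2:ℂ) * trace β = 0 := by linear_combination h
    simpa using h2
  have hααtr : ∀ i j, trace (α i * α j) = if i = j then 4 else 0 := by
    intro i j
    have h := congrArg trace (hαα i j)
    rw [trace_add, trace_mul_comm (α j)] at h
    have h2 : (2:ℂ) * trace (α i * α j) = trace (if i = j then (2:ℂ) • (1:Matrix (Fin 4) (Fin 4) ℂ) else 0) := by
      linear_combination h
    split_ifs at h2 ⊢ with hij
    · rw [trace_smul, htr1] at h2
      have : (2:ℂ) * trace (α i * α j) = 2 * 4 := by simpa using h2
      exact mul_left_cancel₀ (by norm_num) this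
    · rw [trace_zero] at h2
      simpa using h2
  have hαβtr : ∀ i, trace (α i * β) = 0 := by
    intro i
    have h := congrArg trace (hαβ i)
    rw [trace_add, trace_mul_comm β, trace_zero] at h
    have h2 : (2:ℂ) * trace (α i * β) = 0 := by linear_combination h
    simpa using h2
  have hβαtr : ∀ i, trace (β * α i) = 0 := fun i =>
    (trace_mul_comm β (α i)).trans (hαβtr i)
  -- traces of D0
  have hDtr : ∀ r, trace (D0 r) = 0 := by
    intro r
    rw [hD0]
    simp [trace_add, trace_smul, hαtr, hβtr]
  have hDDtr : ∀ r r' : EuclideanSpace ℝ (Fin 3),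
      trace (D0 r * D0 r') = 4 * ((inner ℝ r r' : ℝ) : ℂ) + 4 := by
    intro r r'
    rw [hD0, hD0]
    simp only [add_mul, mul_add, Finset.sum_mul, Finset.mul_sum, smul_mul_assoc,
      mul_smul_comm, smul_smul, trace_add, Matrix.trace_sum, trace_smul, hααtr, hαβtr,
      hβαtr, hββ, htr1, smul_eq_mul, mul_ite, mul_zero, mul_one, Finset.sum_ite_eq,
      Finset.mem_univ, if_true, Finset.sum_const_zero, add_zero, zero_add]
    rw [PiLp.inner_apply]
    push_cast
    rw [Finset.mul_sum]
    congr 1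
    apply Finset.sum_congr rfl
    intro i _
    simp [RCLike.inner_apply]
    ring
  -- energy facts
  have hEpos : ∀ r, 0 < En r := by
    intro r
    rw [hE]
    exact Real.sqrt_pos.mpr (by positivity)
  have hEsq : ∀ r, En r ^ 2 = 1 + ‖r‖ ^ 2 := by
    intro r
    rw [hE]
    exact Real.sq_sqrt (by positivity)
  -- traces of P0
  have hPtr : ∀ r, trace (P0 r) = 2 := by
    intro r
    rw [hP0]
    rw [trace_smul, trace_sub, trace_smul, htr1, hDtr]
    simp
    norm_num
  have hPPtr : ∀ r r' : EuclideanSpace ℝ (Fin 3), trace (P0 r * P0 r') =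
      1 + ((En r : ℂ) * (En r' : ℂ))⁻¹ * (((inner ℝ r r' : ℝ) : ℂ) + 1) := by
    intro r r'
    rw [hP0, hP0]
    simp only [smul_mul_assoc, mul_smul_comm, sub_mul, mul_sub, one_mul, mul_one,
      smul_smul, smul_sub, trace_smul, trace_sub, htr1, hDtr, hDDtr, smul_eq_mul]
    rw [mul_inv]
    ring
  have hPsqtr : ∀ r, trace (P0 r * P0 r) = 2 := by
    intro r
    rw [hPPtr, real_inner_self_eq_norm_sq]
    have hne : ((En r : ℂ)) ≠ 0 := by
      exact_mod_cast (hEpos r).ne'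
    have h2 : ((En r : ℂ)) * ((En r : ℂ)) = ((‖r‖ ^ 2 : ℝ) : ℂ) + 1 := by
      have h3 : En r * En r = ‖r‖ ^ 2 + 1 := by nlinarith [hEsq r]
      exact_mod_cast h3
    rw [← h2, inv_mul_cancel₀ (mul_ne_zero hne hne)]
    norm_num
  -- abbreviations
  set a : EuclideanSpace ℝ (Fin 3) := p + (2 : ℝ)⁻¹ • k with ha
  set b : EuclideanSpace ℝ (Fin 3) := p - (2 : ℝ)⁻¹ • k with hb
  -- the common trace value
  have hmain : trace ((P0 a - P0 b) * (P0 a - P0 b)) = 4 - 2 * trace (P0 a * P0 b) := by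
    rw [sub_mul, mul_sub, mul_sub, trace_sub, trace_sub, trace_sub, hPsqtr a, hPsqtr b,
      trace_mul_comm (P0 b) (P0 a)]
    ring
  constructor
  · rw [hmain, mul_sub, mul_one, trace_sub, hPtr a]
    ring
  · -- inequality
    set s : ℝ := 1 + ‖p‖ ^ 2 with hsdef
    set t : ℝ := ‖k‖ ^ 2 / 4 with htdef
    set u : ℝ := (inner ℝ p k : ℝ) with hudef
    set w : ℝ := En a * En b with hwdef
    have hab : (inner ℝ a b : ℝ) = s - t - 1 := by
      rw [ha, hb]
      simp only [inner_add_left, inner_sub_right, real_inner_smul_left,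
        real_inner_smul_right]
      simp only [real_inner_self_eq_norm_sq, real_inner_comm k p]
      rw [hsdef, htdef]
      ring
    have hna : ‖a‖ ^ 2 = s - 1 + u + t := by
      rw [← real_inner_self_eq_norm_sq, ha]
      simp only [inner_add_left, inner_add_right, real_inner_smul_left,
        real_inner_smul_right]
      simp only [real_inner_self_eq_norm_sq, real_inner_comm k p]
      rw [hsdef, htdef, hudef]
      linarith [real_inner_comm k p]
    have hnb : ‖b‖ ^ 2 = s - 1 - u + t := by
      rw [← real_inner_self_eq_norm_sq, hb]
      simp only [inner_sub_left, inner_sub_right, real_inner_smul_left,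
        real_inner_smul_right]
      simp only [real_inner_self_eq_norm_sq, real_inner_comm k p]
      rw [hsdef, htdef, hudef]
      linarith [real_inner_comm k p]
    have hw : 0 < w := mul_pos (hEpos a) (hEpos b)
    have hw2 : w ^ 2 = (s + t) ^ 2 - u ^ 2 := by
      have : w ^ 2 = (En a) ^ 2 * (En b) ^ 2 := by ring
      rw [this, hEsq a, hEsq b, hna, hnb]
      ring
    have hs : 1 ≤ s := by nlinarith [sq_nonneg ‖p‖]
    have ht : 0 ≤ t := by positivity
    have hu : u ^ 2 ≤ 4 * t * (s - 1) := by
      have h1 : |(inner ℝ p k : ℝ)| ≤ ‖p‖ * ‖k‖ := abs_real_inner_le_norm p k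
      have h2 : u ^ 2 ≤ ‖p‖ ^ 2 * ‖k‖ ^ 2 := by
        rw [hudef, ← sq_abs]
        nlinarith [abs_nonneg (inner ℝ p k : ℝ), mul_nonneg (norm_nonneg p) (norm_nonneg k)]
      rw [htdef, hsdef]
      ring_nf
      ring_nf at h2
      linarith
    have hkey := dirac_key_real_ineq s t u w hs ht hw hw2 hu
    -- rewrite the trace as a real number
    have htrval : trace ((P0 a - P0 b) * (P0 a - P0 b)) =
        (((2 : ℝ) - 2 * (s - t) / w : ℝ) : ℂ) := by
      rw [hmain, hPPtr a b, hab]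
      have hwc : ((w : ℝ) : ℂ) = (En a : ℂ) * (En b : ℂ) := by
        rw [hwdef]; push_cast; ring
      have hwne : ((w : ℝ) : ℂ) ≠ 0 := by exact_mod_cast hw.ne'
      rw [← hwc]
      push_cast
      field_simp
      ring
    rw [htrval, Complex.ofReal_re]
    have hfin : ‖k‖ ^ 2 / En p ^ 2 = 4 * t / s := by
      rw [hEsq p, htdef, hsdef]
      ring
    rw [hfin]
    exact hkey
end

section
/- Let P⁰ be an orthogonal projection and P another orthogonal projection on a Hilbert space with Q = P − P⁰ Hilbert–Schmidt. Then Q³ is trace-class and Tr(P⁰ Q P⁰) + Tr((1−P⁰) Q (1−P⁰)) = Tr(Q³); in particular Q⁺⁺ = (1−P⁰)Q(1−P⁰) and Q⁻⁻ = P⁰QP⁰ are trace-class, since Q² = Q⁺⁺ − Q⁻⁻. -/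
open scoped InnerProductSpace
open ContinuousLinearMap

section Aux

variable {H : Type*} [NormedAddCommGroup H] [InnerProductSpace ℂ H] [CompleteSpace H]
  {ι : Type*}

private lemma parseval_sq (b : HilbertBasis ι ℂ H) (x : H) :
    HasSum (fun i => ‖⟪b i, x⟫_ℂ‖ ^ 2) (‖x‖ ^ 2) := by
  have h := (b.hasSum_inner_mul_inner x x).mapL Complex.reCLM
  have h2 : Complex.reCLM ⟪x, x⟫_ℂ = ‖x‖ ^ 2 := by
    simpa using inner_self_eq_norm_sq (𝕜 := ℂ) x
  rw [h2] at h
  refine h.congr_fun fun i => ?_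
  have hz : ⟪x, b i⟫_ℂ = (starRingEnd ℂ) ⟪b i, x⟫_ℂ := by rw [inner_conj_symm]
  rw [hz]
  set z := ⟪b i, x⟫_ℂ
  simp only [Complex.reCLM_apply, Complex.sq_norm, Complex.normSq_apply,
    Complex.mul_re, Complex.conj_re, Complex.conj_im]
  ring

private lemma trace_comm (b : HilbertBasis ι ℂ H) (S T : H →L[ℂ] H)
    (hS : Summable fun i => ‖S (b i)‖ ^ 2)
    (hT : Summable fun i => ‖(adjoint T) (b i)‖ ^ 2) :
    ∑' i, ⟪b i, (S * T) (b i)⟫_ℂ = ∑' i, ⟪b i, (T * S) (b i)⟫_ℂ := by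
  classical
  have hrow : ∀ i, HasSum (fun j => ⟪b j, S (b i)⟫_ℂ * ⟪b i, T (b j)⟫_ℂ)
      ⟪b i, (T * S) (b i)⟫_ℂ := by
    intro i
    have h := b.hasSum_inner_mul_inner ((adjoint T) (b i)) (S (b i))
    rw [adjoint_inner_left] at h
    refine h.congr_fun fun j => ?_
    rw [adjoint_inner_left, mul_comm]
  have hcol : ∀ j, HasSum (fun i => ⟪b j, S (b i)⟫_ℂ * ⟪b i, T (b j)⟫_ℂ)
      ⟪b j, (S * T) (b j)⟫_ℂ := by
    intro j
    have h := b.hasSum_inner_mul_inner ((adjoint S) (b j)) (T (b j))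
    rw [adjoint_inner_left] at h
    refine h.congr_fun fun i => ?_
    rw [adjoint_inner_left]
  have hnorm : ∀ i j, ‖⟪b j, S (b i)⟫_ℂ * ⟪b i, T (b j)⟫_ℂ‖
      = ‖⟪b j, S (b i)⟫_ℂ‖ * ‖⟪b j, (adjoint T) (b i)⟫_ℂ‖ := by
    intro i j
    rw [norm_mul]
    congr 1
    rw [adjoint_inner_right]
    exact norm_inner_symm _ _
  have habs : Summable fun p : ι × ι => ‖⟪b p.2, S (b p.1)⟫_ℂ * ⟪b p.1, T (b p.2)⟫_ℂ‖ := by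
    rw [summable_prod_of_nonneg (fun p => norm_nonneg _)]
    constructor
    · intro i
      refine Summable.of_nonneg_of_le (fun j => norm_nonneg _) (fun j => ?_)
        (((parseval_sq b (S (b i))).add (parseval_sq b ((adjoint T) (b i)))).div_const 2).summable
      rw [hnorm i j]
      nlinarith [sq_nonneg (‖⟪b j, S (b i)⟫_ℂ‖ - ‖⟪b j, (adjoint T) (b i)⟫_ℂ‖),
        norm_nonneg (⟪b j, S (b i)⟫_ℂ), norm_nonneg (⟪b j, (adjoint T) (b i)⟫_ℂ)]
    · refine Summable.of_nonneg_of_le (fun i => tsum_nonneg fun j => norm_nonneg _)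
        (fun i => ?_) ((hS.add hT).div_const 2)
      have hsum2 := ((parseval_sq b (S (b i))).add
        (parseval_sq b ((adjoint T) (b i)))).div_const 2
      refine le_trans (Summable.tsum_le_tsum (fun j => ?_) ?_ hsum2.summable) ?_
      · rw [hnorm i j]
        nlinarith [sq_nonneg (‖⟪b j, S (b i)⟫_ℂ‖ - ‖⟪b j, (adjoint T) (b i)⟫_ℂ‖),
          norm_nonneg (⟪b j, S (b i)⟫_ℂ), norm_nonneg (⟪b j, (adjoint T) (b i)⟫_ℂ)]
      · refine Summable.of_nonneg_of_le (fun j => norm_nonneg _) (fun j => ?_) hsum2.summable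
        rw [hnorm i j]
        nlinarith [sq_nonneg (‖⟪b j, S (b i)⟫_ℂ‖ - ‖⟪b j, (adjoint T) (b i)⟫_ℂ‖),
          norm_nonneg (⟪b j, S (b i)⟫_ℂ), norm_nonneg (⟪b j, (adjoint T) (b i)⟫_ℂ)]
      · rw [hsum2.tsum_eq]
  have hF : Summable (Function.uncurry fun i j => ⟪b j, S (b i)⟫_ℂ * ⟪b i, T (b j)⟫_ℂ) :=
    Summable.of_norm habs
  calc ∑' j, ⟪b j, (S * T) (b j)⟫_ℂ
      = ∑' (j) (i), ⟪b j, S (b i)⟫_ℂ * ⟪b i, T (b j)⟫_ℂ := by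
        exact tsum_congr fun j => (hcol j).tsum_eq.symm
    _ = ∑' (i) (j), ⟪b j, S (b i)⟫_ℂ * ⟪b i, T (b j)⟫_ℂ :=
        Summable.tsum_comm' hF (fun i => (hrow i).summable) (fun j => (hcol j).summable)
    _ = ∑' i, ⟪b i, (T * S) (b i)⟫_ℂ := tsum_congr fun i => (hrow i).tsum_eq

end Aux

/-- If `P` and `P⁰` are orthogonal projections with `Q = P − P⁰`
Hilbert–Schmidt, then `Q³` and the diagonal blocks `Q⁺⁺ = (1−P⁰)Q(1−P⁰)`,
`Q⁻⁻ = P⁰QP⁰` are trace-class (their diagonals along a Hilbert basis `b` are summable),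
and `Tr(Q⁻⁻) + Tr(Q⁺⁺) = Tr(Q³)`. -/
theorem pzero_trace_eq_trace_cube {H : Type*} [NormedAddCommGroup H]
    [InnerProductSpace ℂ H] [CompleteSpace H] {ι : Type*} (b : HilbertBasis ι ℂ H)
    (P P0 : H →L[ℂ] H)
    (hP : IsSelfAdjoint P) (hPproj : P * P = P)
    (hP0 : IsSelfAdjoint P0) (hP0proj : P0 * P0 = P0)
    (hHS : Summable fun i => ‖(P - P0) (b i)‖ ^ 2) :
    (Summable fun i => ⟪b i, ((1 - P0) * (P - P0) * (1 - P0)) (b i)⟫_ℂ) ∧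
      (Summable fun i => ⟪b i, (P0 * (P - P0) * P0) (b i)⟫_ℂ) ∧
      (Summable fun i => ⟪b i, ((P - P0) * (P - P0) * (P - P0)) (b i)⟫_ℂ) ∧
      (∑' i, ⟪b i, ((1 - P0) * (P - P0) * (1 - P0)) (b i)⟫_ℂ) +
          (∑' i, ⟪b i, (P0 * (P - P0) * P0) (b i)⟫_ℂ) =
        ∑' i, ⟪b i, ((P - P0) * (P - P0) * (P - P0)) (b i)⟫_ℂ := by
  classical
  have hQsa : IsSelfAdjoint (P - P0) := hP.sub hP0
  have h1P0sa : IsSelfAdjoint ((1 : H →L[ℂ] H) - P0) := by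
    show star _ = _; simp [star_sub, hP0.star_eq]
  have h1Psa : IsSelfAdjoint ((1 : H →L[ℂ] H) - P) := by
    show star _ = _; simp [star_sub, hP.star_eq]
  set C : H →L[ℂ] H := P * (1 - P0) with hCdef
  set D : H →L[ℂ] H := (1 - P) * P0 with hDdef
  set E : H →L[ℂ] H := P0 * (P - P0) with hEdef
  have mP : ∀ X : H →L[ℂ] H, P * (P * X) = P * X := fun X => by rw [← mul_assoc, hPproj]
  have mP0 : ∀ X : H →L[ℂ] H, P0 * (P0 * X) = P0 * X := fun X => by rw [← mul_assoc, hP0proj]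
  have hstarC : star C = (1 - P0) * P := by
    rw [hCdef, star_mul, h1P0sa.star_eq, hP.star_eq]
  have hstarD : star D = P0 * (1 - P) := by
    rw [hDdef, star_mul, h1Psa.star_eq, hP0.star_eq]
  have hstarE : star E = (P - P0) * P0 := by
    rw [hEdef, star_mul, hQsa.star_eq, hP0.star_eq]
  -- operator identities
  have idA : (1 - P0) * (P - P0) * (1 - P0) = star C * C := by
    rw [hstarC, hCdef]
    simp only [mul_sub, sub_mul, mul_one, one_mul, mul_assoc, mP, mP0, hPproj, hP0proj]
    abel
  have idB : P0 * (P - P0) * P0 = -(star D * D) := by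
    rw [hstarD, hDdef]
    simp only [mul_sub, sub_mul, mul_one, one_mul, mul_assoc, mP, mP0, hPproj, hP0proj]
    abel
  have idCD : star C * C + star D * D = (P - P0) * (P - P0) := by
    rw [hstarC, hCdef, hstarD, hDdef]
    simp only [mul_sub, sub_mul, mul_one, one_mul, mul_assoc, mP, mP0, hPproj, hP0proj]
    abel
  have idE : (P - P0) * (P0 * (P - P0)) = star E * E := by
    rw [hstarE, hEdef]
    simp only [mul_sub, sub_mul, mul_one, one_mul, mul_assoc, mP, mP0, hPproj, hP0proj]
    try abel
  have idQ3 : (P - P0) * (P - P0) * (P - P0)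
      = (P - P0) * (P - P0) - (P - P0) * (P0 * (P - P0)) + P0 * (P - P0) * P0 := by
    simp only [mul_sub, sub_mul, mul_one, one_mul, mul_assoc, mP, mP0, hPproj, hP0proj]
    abel
  have idA2 : (1 - P0) * (P - P0) * (1 - P0)
      = (P - P0) * (P - P0) + P0 * (P - P0) * P0 := by
    simp only [mul_sub, sub_mul, mul_one, one_mul, mul_assoc, mP, mP0, hPproj, hP0proj]
    abel
  have id5 : (P0 * (P - P0)) * (P - P0) = -(P0 * (P - P0) * P0) := by
    simp only [mul_sub, sub_mul, mul_one, one_mul, mul_assoc, mP, mP0, hPproj, hP0proj]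
    abel
  have idD : (P - P0) * P0 = -D := by
    rw [hDdef]
    simp only [mul_sub, sub_mul, mul_one, one_mul, mul_assoc, mP, mP0, hPproj, hP0proj]
    abel
  -- diagonal formulas
  have dSq : ∀ (A : H →L[ℂ] H) (x : H), ⟪x, (star A * A) x⟫_ℂ = ((‖A x‖ ^ 2 : ℝ) : ℂ) := by
    intro A x
    rw [ContinuousLinearMap.mul_apply, ContinuousLinearMap.star_eq_adjoint,
      ContinuousLinearMap.adjoint_inner_right, inner_self_eq_norm_sq_to_K]
    push_cast
    try rfl
    try norm_cast
  have dA : ∀ x, ⟪x, ((1 - P0) * (P - P0) * (1 - P0)) x⟫_ℂ = ((‖C x‖ ^ 2 : ℝ) : ℂ) := by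
    intro x; rw [idA]; exact dSq C x
  have dB : ∀ x, ⟪x, (P0 * (P - P0) * P0) x⟫_ℂ = -((‖D x‖ ^ 2 : ℝ) : ℂ) := by
    intro x; rw [idB, ContinuousLinearMap.neg_apply, inner_neg_right, dSq D x]
  have dQ2 : ∀ x, ⟪x, ((P - P0) * (P - P0)) x⟫_ℂ = ((‖(P - P0) x‖ ^ 2 : ℝ) : ℂ) := by
    intro x
    have := dSq (P - P0) x
    rwa [hQsa.star_eq] at this
  have dE : ∀ x, ⟪x, ((P - P0) * (P0 * (P - P0))) x⟫_ℂ = ((‖E x‖ ^ 2 : ℝ) : ℂ) := by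
    intro x; rw [idE]; exact dSq E x
  -- pointwise real identity
  have hpoint : ∀ x : H, ‖C x‖ ^ 2 + ‖D x‖ ^ 2 = ‖(P - P0) x‖ ^ 2 := by
    intro x
    have h := congrArg (fun (A : H →L[ℂ] H) => ⟪x, A x⟫_ℂ) idCD
    simp only [ContinuousLinearMap.add_apply, inner_add_right] at h
    rw [dSq C x, dSq D x, dQ2 x] at h
    exact_mod_cast h
  -- real summabilities
  have sCr : Summable fun i => ‖C (b i)‖ ^ 2 := by
    refine Summable.of_nonneg_of_le (fun i => sq_nonneg _) (fun i => ?_) hHS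
    nlinarith [hpoint (b i), sq_nonneg ‖D (b i)‖]
  have sDr : Summable fun i => ‖D (b i)‖ ^ 2 := by
    refine Summable.of_nonneg_of_le (fun i => sq_nonneg _) (fun i => ?_) hHS
    nlinarith [hpoint (b i), sq_nonneg ‖C (b i)‖]
  have sEr : Summable fun i => ‖E (b i)‖ ^ 2 := by
    refine Summable.of_nonneg_of_le (fun i => sq_nonneg _) (fun i => ?_) (hHS.mul_left (‖P0‖ ^ 2))
    have h1 : ‖E (b i)‖ ≤ ‖P0‖ * ‖(P - P0) (b i)‖ := by
      rw [hEdef, ContinuousLinearMap.mul_apply]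
      exact P0.le_opNorm _
    calc ‖E (b i)‖ ^ 2 ≤ (‖P0‖ * ‖(P - P0) (b i)‖) ^ 2 := by
          exact pow_le_pow_left₀ (norm_nonneg _) h1 2
      _ = ‖P0‖ ^ 2 * ‖(P - P0) (b i)‖ ^ 2 := by ring
  -- complex summabilities
  have sA : Summable fun i => ⟪b i, ((1 - P0) * (P - P0) * (1 - P0)) (b i)⟫_ℂ :=
    (Complex.summable_ofReal.2 sCr).congr fun i => (dA (b i)).symm
  have sB : Summable fun i => ⟪b i, (P0 * (P - P0) * P0) (b i)⟫_ℂ :=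
    ((Complex.summable_ofReal.2 sDr).neg).congr fun i => (dB (b i)).symm
  have sQ2c : Summable fun i => ⟪b i, ((P - P0) * (P - P0)) (b i)⟫_ℂ :=
    (Complex.summable_ofReal.2 hHS).congr fun i => (dQ2 (b i)).symm
  have sEc : Summable fun i => ⟪b i, ((P - P0) * (P0 * (P - P0))) (b i)⟫_ℂ :=
    (Complex.summable_ofReal.2 sEr).congr fun i => (dE (b i)).symm
  have dQ3 : ∀ x, ⟪x, ((P - P0) * (P - P0) * (P - P0)) x⟫_ℂ
      = ⟪x, ((P - P0) * (P - P0)) x⟫_ℂ - ⟪x, ((P - P0) * (P0 * (P - P0))) x⟫_ℂ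
        + ⟪x, (P0 * (P - P0) * P0) x⟫_ℂ := by
    intro x
    rw [idQ3]
    simp only [ContinuousLinearMap.add_apply, ContinuousLinearMap.sub_apply,
      inner_add_right, inner_sub_right]
  have sQ3 : Summable fun i => ⟪b i, ((P - P0) * (P - P0) * (P - P0)) (b i)⟫_ℂ :=
    ((sQ2c.sub sEc).add sB).congr fun i => (dQ3 (b i)).symm
  refine ⟨sA, sB, sQ3, ?_⟩
  -- trace equality
  have tA : (∑' i, ⟪b i, ((1 - P0) * (P - P0) * (1 - P0)) (b i)⟫_ℂ)
      = (∑' i, ⟪b i, ((P - P0) * (P - P0)) (b i)⟫_ℂ)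
        + (∑' i, ⟪b i, (P0 * (P - P0) * P0) (b i)⟫_ℂ) := by
    rw [← Summable.tsum_add sQ2c sB]
    refine tsum_congr fun i => ?_
    rw [idA2]
    simp only [ContinuousLinearMap.add_apply, inner_add_right]
  have tQ3 : (∑' i, ⟪b i, ((P - P0) * (P - P0) * (P - P0)) (b i)⟫_ℂ)
      = (∑' i, ⟪b i, ((P - P0) * (P - P0)) (b i)⟫_ℂ)
        - (∑' i, ⟪b i, ((P - P0) * (P0 * (P - P0))) (b i)⟫_ℂ)
        + (∑' i, ⟪b i, (P0 * (P - P0) * P0) (b i)⟫_ℂ) := by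
    rw [← Summable.tsum_sub sQ2c sEc, ← Summable.tsum_add (sQ2c.sub sEc) sB]
    exact tsum_congr fun i => dQ3 (b i)
  have hadj : ContinuousLinearMap.adjoint (P0 * (P - P0)) = (P - P0) * P0 := by
    rw [← ContinuousLinearMap.star_eq_adjoint, star_mul, hQsa.star_eq, hP0.star_eq]
  have hTsum : Summable fun i =>
      ‖(ContinuousLinearMap.adjoint (P0 * (P - P0))) (b i)‖ ^ 2 := by
    refine sDr.congr fun i => ?_
    rw [hadj, idD]
    simp
  have tE : (∑' i, ⟪b i, ((P - P0) * (P0 * (P - P0))) (b i)⟫_ℂ)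
      = -(∑' i, ⟪b i, (P0 * (P - P0) * P0) (b i)⟫_ℂ) := by
    have h := trace_comm b (P - P0) (P0 * (P - P0)) hHS hTsum
    rw [h, ← tsum_neg]
    refine tsum_congr fun i => ?_
    rw [id5, ContinuousLinearMap.neg_apply, inner_neg_right]
  rw [tA, tQ3, tE]
  ring
end

section
/- For a self-adjoint operator Q with −P⁰ ≤ Q ≤ 1 − P⁰ where P⁰ is an orthogonal projection, one has the operator inequality Q² ≤ (1−P⁰)Q(1−P⁰) − P⁰QP⁰. -/
/-! With `A := Q + P⁰`, idempotency of `P⁰` alone turns the difference of the two sides into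
`A (1 - A)`. The hypotheses say `0 ≤ A ≤ 1`, and `A` commutes with `1 - A`, so the product of
these two nonnegative operators is nonnegative. -/

theorem IsIdempotentElem.one_sub_mul_mul_one_sub_sub_mul_mul_sub_mul_self {R : Type*} [Ring R]
    {P : R} (hP : IsIdempotentElem P) (Q : R) :
    (1 - P) * Q * (1 - P) - P * Q * P - Q * Q = (Q + P) * (1 - (Q + P)) := by
  rw [show (Q + P) * (1 - (Q + P)) = Q + P - P * P - Q * P - P * Q - Q * Q by noncomm_ring, hP.eq]
  noncomm_ring

theorem mul_one_sub_nonneg {A : Type*} [CStarAlgebra A] [PartialOrder A] [StarOrderedRing A]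
    {a : A} (ha : 0 ≤ a) (ha' : 0 ≤ 1 - a) : 0 ≤ a * (1 - a) :=
  Commute.mul_nonneg ha ha' ((Commute.one_right a).sub_right (Commute.refl a))

theorem square_le_blocks_general {H : Type*} [NormedAddCommGroup H] [InnerProductSpace ℂ H]
    [CompleteSpace H] (Q P0 : H →L[ℂ] H)
    (hP0proj : P0 * P0 = P0)
    (h1 : (Q + P0).IsPositive) (h2 : (1 - P0 - Q).IsPositive) :
    ((1 - P0) * Q * (1 - P0) - P0 * Q * P0 - Q * Q).IsPositive := by
  rw [← ContinuousLinearMap.nonneg_iff_isPositive] at h1 h2 ⊢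
  rw [show (1 : H →L[ℂ] H) - P0 - Q = 1 - (Q + P0) by abel] at h2
  rw [IsIdempotentElem.one_sub_mul_mul_one_sub_sub_mul_mul_sub_mul_self hP0proj]
  exact mul_one_sub_nonneg h1 h2

/-- For a bounded self-adjoint `Q` with `−P⁰ ≤ Q ≤ 1 − P⁰`, where `P⁰` is
an orthogonal projection, one has the operator inequality
`Q² ≤ (1−P⁰)Q(1−P⁰) − P⁰QP⁰`. -/
theorem square_le_blocks {H : Type*} [NormedAddCommGroup H] [InnerProductSpace ℂ H]
    [CompleteSpace H] (Q P0 : H →L[ℂ] H)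
    (hQ : IsSelfAdjoint Q) (hP0 : IsSelfAdjoint P0) (hP0proj : P0 * P0 = P0)
    (h1 : (Q + P0).IsPositive) (h2 : (1 - P0 - Q).IsPositive) :
    ((1 - P0) * Q * (1 - P0) - P0 * Q * P0 - Q * Q).IsPositive :=
  square_le_blocks_general Q P0 hP0proj h1 h2
end
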